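/- Let n ≥ k ≥ 2. For every X = (x_{ij}) ∈ M_{n,2}(F) there exists B ∈ M_{n,k−2}(F) such that det_{n,k}(X|B) = (x_{1,1}x_{2,2} − x_{1,2}x_{2,1}) + Σ_{l=3}^{n−k+2} (−1)^{l−2} · [ (x_{1,1} − x_{2,1})x_{l,2} − (x_{1,2} − x_{2,2})x_{l,1} ] + Σ_{2 < l < m ≤ n−k+2} (−1)^{l+m−3} · (x_{l,1}x_{m,2} − x_{l,2}x_{m,1}). -/
import Mathlib


/- The Cullis determinant of an `n × k` matrix: the alternating sum of its maximal
(`k × k`) minors, indexed by strictly increasing selections of `k` rows. -/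
open Classical in
noncomputable def cullisDet {F : Type*} [Field F] {n k : ℕ} (X : Matrix (Fin n) (Fin k) F) : F :=
  ∑ f ∈ Finset.univ.filter (fun f : Fin k → Fin n => StrictMono f),
    (-1 : F) ^ (∑ α : Fin k, ((f α : ℕ) + (α : ℕ))) * (X.submatrix f id).det

/-- The block matrix `X|B` obtained by appending the `k − 2` columns of `B` to the
right of the two columns of `X`. -/
def hcatK {F : Type*} [Field F] {n k : ℕ} (X : Matrix (Fin n) (Fin 2) F)
    (B : Matrix (Fin n) (Fin (k - 2)) F) : Matrix (Fin n) (Fin k) F :=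
  fun i j =>
    if h : (j : ℕ) < 2 then X i ⟨(j : ℕ), h⟩
    else B i ⟨(j : ℕ) - 2, by have := j.isLt; omega⟩

namespace CullisAux

variable {F : Type*} [Field F]

lemma npow_mod (a b : ℕ) (h : a % 2 = b % 2) : (-1 : F) ^ a = (-1 : F) ^ b := by
  conv_lhs => rw [← Nat.div_add_mod a 2]
  conv_rhs => rw [← Nat.div_add_mod b 2]
  rw [pow_add, pow_add, pow_mul, pow_mul, neg_one_sq, one_pow, one_pow, h]

lemma sm_ge_nat {a b : ℕ} {f : Fin a → Fin b} (hf : StrictMono f) :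
    ∀ (i : ℕ) (h : i < a), i ≤ (f ⟨i, h⟩ : ℕ) := by
  intro i
  induction i with
  | zero => intro h; exact Nat.zero_le _
  | succ i ih =>
    intro h
    have hp : i < a := by omega
    have h2 := hf (show (⟨i, hp⟩ : Fin a) < ⟨i + 1, h⟩ from Fin.mk_lt_mk.mpr (by omega))
    rw [Fin.lt_def] at h2
    have h3 := ih hp
    omega

lemma sm_ub {a b : ℕ} {f : Fin a → Fin b} (hf : StrictMono f) (v : Fin a) :
    (f v : ℕ) + a ≤ (v : ℕ) + b := by
  have hf' : StrictMono (fun i : Fin a => (f i.rev).rev) := by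
    intro u w huw
    exact Fin.rev_lt_rev.mpr (hf (Fin.rev_lt_rev.mpr huw))
  have h := sm_ge_nat hf' (v.rev : ℕ) v.rev.isLt
  simp only [Fin.eta] at h
  rw [Fin.rev_rev] at h
  have hv := v.isLt
  have hfv := (f v).isLt
  rw [Fin.val_rev, Fin.val_rev] at h
  omega

def Bmat (m r : ℕ) : Matrix (Fin (m + r)) (Fin r) F :=
  fun i j => if (i : ℕ) = m + (j : ℕ) then (-1 : F) ^ m else 0

def xE (m r : ℕ) (X : Matrix (Fin (m + r)) (Fin 2) F) (i : ℕ) (j : Fin 2) : F :=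
  if h : i < m + r then X ⟨i, h⟩ j else 0

def tE (m r : ℕ) (X : Matrix (Fin (m + r)) (Fin 2) F) (a b : ℕ) : F :=
  (-1 : F) ^ (a + b + 1) *
    (xE m r X a 0 * xE m r X b 1 - xE m r X a 1 * xE m r X b 0)

lemma rowsum (g : ℕ → F) : ∀ m, 2 ≤ m →
    ∑ a ∈ Finset.range m, g a = g 0 + g 1 + ∑ l ∈ Finset.Icc 3 m, g (l - 1) := by
  intro m
  induction m with
  | zero => intro h; omega
  | succ m ih =>
    intro h
    rcases Nat.lt_or_ge m 2 with hm | hm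
    · have hm1 : m = 1 := by omega
      subst hm1
      rw [show Finset.Icc 3 2 = ∅ from Finset.Icc_eq_empty (by omega)]
      simp [Finset.sum_range_succ]
    · rw [Finset.sum_range_succ, ih hm, ← Finset.insert_Icc_right_eq_Icc_add_one (by omega : 3 ≤ m + 1),
        Finset.sum_insert (by simp only [Finset.mem_Icc]; omega)]
      simp only [Nat.add_sub_cancel]
      ring

lemma tri (t : ℕ → ℕ → F) : ∀ m, 2 ≤ m →
    ∑ b ∈ Finset.range m, ∑ a ∈ Finset.range b, t a b
      = t 0 1 + (∑ l ∈ Finset.Icc 3 m, (t 0 (l - 1) + t 1 (l - 1)))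
        + ∑ l ∈ Finset.Icc 3 m, ∑ mm ∈ Finset.Icc (l + 1) m, t (l - 1) (mm - 1) := by
  intro m
  induction m with
  | zero => intro h; omega
  | succ m ih =>
    intro h
    rcases Nat.lt_or_ge m 2 with hm | hm
    · have hm1 : m = 1 := by omega
      subst hm1
      rw [show Finset.Icc 3 2 = ∅ from Finset.Icc_eq_empty (by omega)]
      simp [Finset.sum_range_succ]
    · rw [Finset.sum_range_succ, ih hm, rowsum (fun a => t a m) m hm,
        ← Finset.insert_Icc_right_eq_Icc_add_one (by omega : 3 ≤ m + 1),
        Finset.sum_insert (by simp only [Finset.mem_Icc]; omega),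
        Finset.sum_insert (by simp only [Finset.mem_Icc]; omega),
        show Finset.Icc (m + 1 + 1) (m + 1) = ∅ from Finset.Icc_eq_empty (by omega),
        Finset.sum_empty]
      have h3 : ∀ l ∈ Finset.Icc 3 m,
          ∑ mm ∈ Finset.Icc (l + 1) (m + 1), t (l - 1) (mm - 1)
            = t (l - 1) m + ∑ mm ∈ Finset.Icc (l + 1) m, t (l - 1) (mm - 1) := by
        intro l hl
        rw [Finset.mem_Icc] at hl
        rw [← Finset.insert_Icc_right_eq_Icc_add_one (by omega : l + 1 ≤ m + 1),
          Finset.sum_insert (by simp only [Finset.mem_Icc]; omega)]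
        simp only [Nat.add_sub_cancel]
      rw [Finset.sum_congr rfl h3]
      simp only [Finset.sum_add_distrib, Nat.add_sub_cancel]
      ring




lemma det_block (m r : ℕ) (hm : 2 ≤ m) (X : Matrix (Fin (m + r)) (Fin 2) F)
    (f : Fin (r + 2) → Fin (m + r)) (h0 : (f 0 : ℕ) < m) (h1 : (f 1 : ℕ) < m)
    (ht : ∀ j : Fin r, (f ⟨(j : ℕ) + 2, by omega⟩ : ℕ) = m + (j : ℕ)) :
    ((hcatK (k := r + 2) X (Bmat m r)).submatrix f id).det
      = (X (f 0) 0 * X (f 1) 1 - X (f 0) 1 * X (f 1) 0) * (-1 : F) ^ (m * r) := by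
  have hlow : ∀ (a : ℕ) (pa : a < r + 2), a < 2 → (f ⟨a, pa⟩ : ℕ) < m := by
    intro a pa ha
    interval_cases a
    · simpa [show (⟨0, pa⟩ : Fin (r + 2)) = 0 from rfl] using h0
    · simpa [show (⟨1, pa⟩ : Fin (r + 2)) = 1 from rfl] using h1
  let e : Fin (r + 2) ≃ Fin 2 ⊕ Fin r :=
    (finCongr (by omega : r + 2 = 2 + r)).trans finSumFinEquiv.symm
  have he1 : ∀ a : Fin 2, e.symm (Sum.inl a) = (⟨(a : ℕ), by omega⟩ : Fin (r + 2)) := by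
    intro a
    apply Fin.ext
    simp [e]
  have he2 : ∀ i : Fin r, e.symm (Sum.inr i) = (⟨(i : ℕ) + 2, by omega⟩ : Fin (r + 2)) := by
    intro i
    apply Fin.ext
    simp [e]
    try omega
  let A : Matrix (Fin 2) (Fin 2) F := Matrix.of fun a b => X (f ⟨(a : ℕ), by omega⟩) b
  let C : Matrix (Fin r) (Fin 2) F := Matrix.of fun i b => X (f ⟨(i : ℕ) + 2, by omega⟩) b
  let D : Matrix (Fin r) (Fin r) F := Matrix.diagonal fun _ => (-1 : F) ^ m
  have key : ((hcatK (k := r + 2) X (Bmat m r)).submatrix f id).submatrix e.symm e.symm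
      = Matrix.fromBlocks A 0 C D := by
    ext s t
    rcases s with a | i <;> rcases t with b | j <;>
      rw [Matrix.submatrix_apply, Matrix.submatrix_apply]
    · rw [he1 a, he1 b]
      show hcatK (k := r + 2) X (Bmat m r) (f ⟨(a : ℕ), _⟩) ⟨(b : ℕ), _⟩ = A a b
      rw [hcatK]
      rw [dif_pos (show ((⟨(b : ℕ), by omega⟩ : Fin (r + 2)) : ℕ) < 2 from b.isLt)]
      rfl
    · rw [he1 a, he2 j]
      show hcatK (k := r + 2) X (Bmat m r) (f ⟨(a : ℕ), _⟩) ⟨(j : ℕ) + 2, _⟩ = 0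
      rw [hcatK]
      rw [dif_neg (by simp)]
      show Bmat m r _ _ = 0
      rw [Bmat]
      have := hlow (a : ℕ) (by omega) a.isLt
      rw [if_neg (by simp; omega)]
    · rw [he2 i, he1 b]
      show hcatK (k := r + 2) X (Bmat m r) (f ⟨(i : ℕ) + 2, _⟩) ⟨(b : ℕ), _⟩ = C i b
      rw [hcatK]
      rw [dif_pos (show ((⟨(b : ℕ), by omega⟩ : Fin (r + 2)) : ℕ) < 2 from b.isLt)]
      rfl
    · rw [he2 i, he2 j]
      show hcatK (k := r + 2) X (Bmat m r) (f ⟨(i : ℕ) + 2, _⟩) ⟨(j : ℕ) + 2, _⟩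
        = Matrix.fromBlocks A 0 C D (Sum.inr i) (Sum.inr j)
      rw [hcatK]
      rw [dif_neg (by simp)]
      show Bmat m r _ _ = D i j
      rw [Bmat]
      have hti := ht i
      show (if (f ⟨(i : ℕ) + 2, _⟩ : ℕ) = m + ((j : ℕ) + 2 - 2) then (-1 : F) ^ m else 0) = D i j
      rw [hti]
      show (if m + (i : ℕ) = m + ((j : ℕ) + 2 - 2) then (-1 : F) ^ m else 0)
        = Matrix.diagonal (fun _ : Fin r => (-1 : F) ^ m) i j
      rw [Matrix.diagonal_apply]
      by_cases hij : i = j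
      · subst hij; rw [if_pos (by omega), if_pos rfl]
      · rw [if_neg (by have : (i : ℕ) ≠ (j : ℕ) := fun hc => hij (Fin.ext hc); omega),
          if_neg hij]
  have hdet := Matrix.det_submatrix_equiv_self e.symm
    ((hcatK (k := r + 2) X (Bmat m r)).submatrix f id)
  rw [← hdet, key, Matrix.det_fromBlocks_zero₁₂, Matrix.det_fin_two, Matrix.det_diagonal,
    Finset.prod_const, Finset.card_univ, Fintype.card_fin, ← pow_mul]
  have hA : ∀ (a b : Fin 2), A a b = X (f ⟨(a : ℕ), by omega⟩) b := fun _ _ => rfl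
  rw [hA, hA, hA, hA]
  rw [show (⟨((0 : Fin 2) : ℕ), by omega⟩ : Fin (r + 2)) = 0 from rfl,
    show (⟨((1 : Fin 2) : ℕ), by omega⟩ : Fin (r + 2)) = 1 from rfl]


lemma sign_calc (m r : ℕ) (f : Fin (r + 2) → Fin (m + r))
    (ht : ∀ j : Fin r, (f ⟨(j : ℕ) + 2, by omega⟩ : ℕ) = m + (j : ℕ)) :
    ∑ α : Fin (r + 2), ((f α : ℕ) + (α : ℕ))
      = (f 0 : ℕ) + (f 1 : ℕ) + 1 + (r * (m + 2) + 2 * ∑ j : Fin r, (j : ℕ)) := by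
  rw [Fin.sum_univ_succ, Fin.sum_univ_succ]
  simp only [Fin.succ_zero_eq_one, Fin.val_zero, Fin.val_one, Fin.val_succ]
  have hj : ∀ j : Fin r, (f j.succ.succ : ℕ) = m + (j : ℕ) := by
    intro j
    rw [show j.succ.succ = (⟨(j : ℕ) + 2, by omega⟩ : Fin (r + 2)) from
      Fin.ext (by simp [Fin.val_succ])]
    exact ht j
  have key : ∑ j : Fin r, ((f j.succ.succ : ℕ) + ((j : ℕ) + 1 + 1))
      = ∑ j : Fin r, ((m + 2) + 2 * (j : ℕ)) :=
    Finset.sum_congr rfl fun j _ => by rw [hj j]; ring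
  rw [key, Finset.sum_add_distrib, Finset.sum_const, Finset.card_univ, Fintype.card_fin,
    ← Finset.mul_sum, smul_eq_mul]
  ring

def gf (m r a b : ℕ) (hmr : 0 < m + r) : Fin (r + 2) → Fin (m + r) := fun j =>
  if (j : ℕ) = 0 then ⟨a % (m + r), Nat.mod_lt _ hmr⟩
  else if (j : ℕ) = 1 then ⟨b % (m + r), Nat.mod_lt _ hmr⟩
  else ⟨m + (j : ℕ) - 2, by have := j.isLt; omega⟩

lemma gf_val (m r a b : ℕ) (hmr : 0 < m + r) (j : Fin (r + 2)) :
    (gf m r a b hmr j : ℕ)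
      = if (j : ℕ) = 0 then a % (m + r)
        else if (j : ℕ) = 1 then b % (m + r) else m + (j : ℕ) - 2 := by
  rw [gf]
  split_ifs <;> rfl

lemma gf_sm (m r a b : ℕ) (hmr : 0 < m + r) (hab : a < b) (hbm : b < m) :
    StrictMono (gf m r a b hmr) := by
  intro u v huv
  rw [Fin.lt_def] at huv ⊢
  rw [gf_val, gf_val]
  have hu := u.isLt
  have hv := v.isLt
  have ha : a % (m + r) = a := Nat.mod_eq_of_lt (by omega)
  have hb : b % (m + r) = b := Nat.mod_eq_of_lt (by omega)
  split_ifs <;> omega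

open Classical in
lemma main_reduce (m r : ℕ) (hm : 2 ≤ m) (X : Matrix (Fin (m + r)) (Fin 2) F) :
    cullisDet (hcatK (k := r + 2) X (Bmat m r))
      = ∑ b ∈ Finset.range m, ∑ a ∈ Finset.range b, tE m r X a b := by
  have hmr : 0 < m + r := by omega
  rw [Finset.sum_sigma']
  simp only [cullisDet]
  have hsub : (Finset.univ.filter fun f : Fin (r + 2) → Fin (m + r) =>
        StrictMono f ∧ ∀ j : Fin r, (f ⟨(j : ℕ) + 2, by omega⟩ : ℕ) = m + (j : ℕ))
      ⊆ Finset.univ.filter fun f : Fin (r + 2) → Fin (m + r) => StrictMono f := by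
    intro f hf
    simp only [Finset.mem_filter] at hf ⊢
    exact ⟨hf.1, hf.2.1⟩
  have hvanish : ∀ f ∈ Finset.univ.filter
        (fun f : Fin (r + 2) → Fin (m + r) => StrictMono f),
      f ∉ (Finset.univ.filter fun f : Fin (r + 2) → Fin (m + r) =>
        StrictMono f ∧ ∀ j : Fin r, (f ⟨(j : ℕ) + 2, by omega⟩ : ℕ) = m + (j : ℕ)) →
      (-1 : F) ^ (∑ α : Fin (r + 2), ((f α : ℕ) + (α : ℕ)))
        * (((hcatK (k := r + 2) X (Bmat m r)).submatrix f id)).det = 0 := by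
    intro f hf hnf
    simp only [Finset.mem_filter, Finset.mem_univ, true_and] at hf hnf
    have hnt : ¬ ∀ j : Fin r, (f ⟨(j : ℕ) + 2, by omega⟩ : ℕ) = m + (j : ℕ) := by tauto
    push_neg at hnt
    set T := Finset.univ.filter
      (fun j : Fin r => (f ⟨(j : ℕ) + 2, by omega⟩ : ℕ) ≠ m + (j : ℕ)) with hTdef
    have hTne : T.Nonempty := by
      obtain ⟨j, hj⟩ := hnt
      exact ⟨j, by simp only [hTdef, Finset.mem_filter, Finset.mem_univ, true_and]; exact hj⟩
    set t0 := T.max' hTne with ht0def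
    have ht0T := T.max'_mem hTne
    have hne0 : ∀ p : ((t0 : ℕ) + 2 < r + 2), (f ⟨(t0 : ℕ) + 2, p⟩ : ℕ) ≠ m + (t0 : ℕ) := by
      intro p
      exact (Finset.mem_filter.mp ht0T).2
    have hmax : ∀ jv : ℕ, jv < r → (t0 : ℕ) < jv →
        ∀ p : (jv + 2 < r + 2), (f ⟨jv + 2, p⟩ : ℕ) = m + jv := by
      intro jv hjvr hjv p
      by_contra hne
      have hjT : (⟨jv, hjvr⟩ : Fin r) ∈ T :=
        Finset.mem_filter.mpr ⟨Finset.mem_univ _, hne⟩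
      have hle := T.le_max' _ hjT
      rw [Fin.le_def] at hle
      have hlev : jv ≤ (t0 : ℕ) := hle
      omega
    have pt0 : (t0 : ℕ) + 2 < r + 2 := by have := t0.isLt; omega
    have hub : (f ⟨(t0 : ℕ) + 2, pt0⟩ : ℕ) ≤ m + (t0 : ℕ) := by
      have h := sm_ub hf ⟨(t0 : ℕ) + 2, pt0⟩
      rw [show ((⟨(t0 : ℕ) + 2, pt0⟩ : Fin (r + 2)) : ℕ) = (t0 : ℕ) + 2 from rfl] at h
      omega
    refine mul_eq_zero_of_right _ (Matrix.det_eq_zero_of_column_eq_zero ⟨(t0 : ℕ) + 2, pt0⟩ ?_)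
    intro α
    rw [Matrix.submatrix_apply, id_eq, hcatK]
    rw [dif_neg (show ¬(((⟨(t0 : ℕ) + 2, pt0⟩ : Fin (r + 2)) : ℕ) < 2) from
      (by omega : ¬((t0 : ℕ) + 2 < 2)))]
    rw [Bmat]
    rw [if_neg ?_]
    show ¬ ((f α : ℕ) = m + (((⟨(t0 : ℕ) + 2, pt0⟩ : Fin (r + 2)) : ℕ) - 2))
    rw [show ((((⟨(t0 : ℕ) + 2, pt0⟩ : Fin (r + 2)) : ℕ) - 2)) = (t0 : ℕ) from rfl]
    rcases Nat.lt_or_ge ((t0 : ℕ) + 2) (α : ℕ) with hgt | hle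
    · have hαlt := α.isLt
      have hs : ((α : ℕ) - 2) < r := by omega
      have pα : ((α : ℕ) - 2) + 2 < r + 2 := by omega
      have heq2 := hmax ((α : ℕ) - 2) hs (by omega) pα
      have hfα : f α = f ⟨((α : ℕ) - 2) + 2, pα⟩ :=
        congrArg f (Fin.ext ((by omega : (α : ℕ) = (α : ℕ) - 2 + 2)))
      rw [hfα]
      omega
    · have hmono : (f α : ℕ) ≤ (f ⟨(t0 : ℕ) + 2, pt0⟩ : ℕ) := by
        have hle2 := hf.monotone (show α ≤ (⟨(t0 : ℕ) + 2, pt0⟩ : Fin (r + 2)) from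
          by rw [Fin.le_def]; exact hle)
        rw [Fin.le_def] at hle2
        exact hle2
      have hne := hne0 pt0
      omega
  rw [← Finset.sum_subset hsub hvanish]
  refine Finset.sum_nbij' (fun f => (⟨(f 1 : ℕ), (f 0 : ℕ)⟩ : (_ : ℕ) × ℕ))
    (fun p => gf m r p.2 p.1 hmr) ?_ ?_ ?_ ?_ ?_
  · -- maps into sigma
    intro f hf
    simp only [Finset.mem_filter, Finset.mem_univ, true_and] at hf
    obtain ⟨hSM, htail⟩ := hf
    have hb1 : (f 1 : ℕ) < m := by
      have h := sm_ub hSM 1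
      rw [Fin.val_one] at h
      omega
    have h01 : (f 0 : ℕ) < (f 1 : ℕ) := by
      have := hSM (show (0 : Fin (r + 2)) < 1 from by
        rw [Fin.lt_def, Fin.val_zero, Fin.val_one]; omega)
      rw [Fin.lt_def] at this
      exact this
    simp only [Finset.mem_sigma, Finset.mem_range]
    exact ⟨hb1, h01⟩
  · -- inverse maps into filter
    rintro ⟨b, a⟩ hp
    simp only [Finset.mem_sigma, Finset.mem_range] at hp
    obtain ⟨hbm, hab⟩ := hp
    simp only [Finset.mem_filter, Finset.mem_univ, true_and]
    constructor
    · exact gf_sm m r a b hmr hab hbm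
    · intro j
      rw [gf_val]
      rw [show ((⟨(j : ℕ) + 2, by omega⟩ : Fin (r + 2)) : ℕ) = (j : ℕ) + 2 from rfl]
      rw [if_neg (by omega), if_neg (by omega)]
      omega
  · -- left inverse
    intro f hf
    simp only [Finset.mem_filter, Finset.mem_univ, true_and] at hf
    obtain ⟨hSM, htail⟩ := hf
    funext j
    apply Fin.ext
    rw [gf_val]
    by_cases hj0 : (j : ℕ) = 0
    · rw [if_pos hj0, show j = 0 from Fin.ext (by rw [Fin.val_zero]; exact hj0)]
      exact Nat.mod_eq_of_lt (f 0).isLt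
    · rw [if_neg hj0]
      by_cases hj1 : (j : ℕ) = 1
      · rw [if_pos hj1, show j = 1 from Fin.ext (by rw [Fin.val_one]; exact hj1)]
        exact Nat.mod_eq_of_lt (f 1).isLt
      · rw [if_neg hj1]
        have hs : ((j : ℕ) - 2) < r := by have := j.isLt; omega
        have pj : ((j : ℕ) - 2) + 2 < r + 2 := by have := j.isLt; omega
        have hjge : 2 ≤ (j : ℕ) := by omega
        have heqv : (f ⟨((j : ℕ) - 2) + 2, pj⟩ : ℕ) = m + ((j : ℕ) - 2) :=
          htail ⟨(j : ℕ) - 2, hs⟩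
        have hfj : f j = f ⟨((j : ℕ) - 2) + 2, pj⟩ :=
          congrArg f (Fin.ext ((by omega : (j : ℕ) = (j : ℕ) - 2 + 2)))
        rw [hfj, heqv]
        omega
  · -- right inverse
    rintro ⟨b, a⟩ hp
    simp only [Finset.mem_sigma, Finset.mem_range] at hp
    obtain ⟨hbm, hab⟩ := hp
    have h1 : (gf m r a b hmr 1 : ℕ) = b := by
      rw [gf_val, Fin.val_one, if_neg (by omega), if_pos rfl]
      exact Nat.mod_eq_of_lt (by omega)
    have h0 : (gf m r a b hmr 0 : ℕ) = a := by
      rw [gf_val, Fin.val_zero, if_pos rfl]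
      exact Nat.mod_eq_of_lt (by omega)
    show (⟨(gf m r a b hmr 1 : ℕ), (gf m r a b hmr 0 : ℕ)⟩ : (_ : ℕ) × ℕ) = ⟨b, a⟩
    rw [h0, h1]
  · -- values agree
    intro f hf
    simp only [Finset.mem_filter, Finset.mem_univ, true_and] at hf
    obtain ⟨hSM, htail⟩ := hf
    have hb1 : (f 1 : ℕ) < m := by
      have h := sm_ub hSM 1
      rw [Fin.val_one] at h
      omega
    have hb0 : (f 0 : ℕ) < m := by
      have h01 := hSM (show (0 : Fin (r + 2)) < 1 from by
        rw [Fin.lt_def, Fin.val_zero, Fin.val_one]; omega)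
      rw [Fin.lt_def] at h01
      omega
    rw [det_block m r hm X f hb0 hb1 htail, sign_calc m r f htail]
    show _ = tE m r X (f 0 : ℕ) (f 1 : ℕ)
    rw [tE]
    simp only [xE, dif_pos (f 0).isLt, dif_pos (f 1).isLt, Fin.eta]
    have hsgn : (-1 : F) ^ ((f 0 : ℕ) + (f 1 : ℕ) + 1
          + (r * (m + 2) + 2 * ∑ j : Fin r, (j : ℕ))) * (-1 : F) ^ (m * r)
        = (-1 : F) ^ ((f 0 : ℕ) + (f 1 : ℕ) + 1) := by
      rw [← pow_add]
      refine npow_mod _ _ ?_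
      have hr2 : r * (m + 2) = m * r + 2 * r := by ring
      omega
    linear_combination (X (f 0) 0 * X (f 1) 1 - X (f 0) 1 * X (f 1) 0) * hsgn

end CullisAux

/-- for `n ≥ k ≥ 2`, for every `n × 2` matrix `X` there is `B` with
`cullisDet (X|B)` equal to the displayed combination of `2×2` minors
(all row indices `1`-indexed). -/
theorem cullis_exists_sum_expansion {F : Type*} [Field F] (n k : ℕ)
    (hk : 2 ≤ k) (hn : k ≤ n) (X : Matrix (Fin n) (Fin 2) F) :
    ∃ B : Matrix (Fin n) (Fin (k - 2)) F,
      cullisDet (hcatK X B) =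
        (X ⟨0, by omega⟩ 0 * X ⟨1, by omega⟩ 1 -
            X ⟨0, by omega⟩ 1 * X ⟨1, by omega⟩ 0) +
        (∑ l ∈ (Finset.Icc 3 (n - k + 2)).attach,
          (-1 : F) ^ ((l : ℕ) - 2) *
            ((X ⟨0, by omega⟩ 0 - X ⟨1, by omega⟩ 0) *
                X ⟨(l : ℕ) - 1, by have := Finset.mem_Icc.mp l.2; omega⟩ 1 -
             (X ⟨0, by omega⟩ 1 - X ⟨1, by omega⟩ 1) *
                X ⟨(l : ℕ) - 1, by have := Finset.mem_Icc.mp l.2; omega⟩ 0)) +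
        ∑ l ∈ (Finset.Icc 3 (n - k + 2)).attach,
          ∑ m ∈ (Finset.Icc ((l : ℕ) + 1) (n - k + 2)).attach,
            (-1 : F) ^ ((l : ℕ) + (m : ℕ) - 3) *
              (X ⟨(l : ℕ) - 1, by have := Finset.mem_Icc.mp l.2; omega⟩ 0 *
                  X ⟨(m : ℕ) - 1, by have := Finset.mem_Icc.mp m.2; omega⟩ 1 -
               X ⟨(l : ℕ) - 1, by have := Finset.mem_Icc.mp l.2; omega⟩ 1 *
                  X ⟨(m : ℕ) - 1, by have := Finset.mem_Icc.mp m.2; omega⟩ 0) := by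
  obtain ⟨r, rfl⟩ : ∃ r, k = r + 2 := ⟨k - 2, by omega⟩
  obtain ⟨m, rfl⟩ : ∃ m, n = m + r := ⟨n - r, by omega⟩
  have hm : 2 ≤ m := by omega
  have hE : m + r - (r + 2) + 2 = m := by omega
  refine ⟨CullisAux.Bmat m r, ?_⟩
  rw [CullisAux.main_reduce m r hm X, CullisAux.tri (CullisAux.tE m r X) m hm]
  congr 1
  · congr 1
    · -- constant term
      rw [CullisAux.tE]
      simp only [CullisAux.xE, dif_pos (show (0 : ℕ) < m + r from by omega),
        dif_pos (show (1 : ℕ) < m + r from by omega)]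
      norm_num
    · -- single sum
      refine Finset.sum_bij (fun l hl => ⟨l, by rw [hE]; exact hl⟩) ?_ ?_ ?_ ?_
      · intro l hl
        exact Finset.mem_attach _ _
      · intro l1 h1 l2 h2 he
        simpa using congrArg Subtype.val he
      · intro b _
        have hb : (b : ℕ) ∈ Finset.Icc 3 m := by
          have h := b.2
          simp only [Finset.mem_Icc] at h ⊢
          omega
        exact ⟨(b : ℕ), hb, Subtype.ext rfl⟩
      · intro l hl
        simp only [Finset.mem_Icc] at hl
        show CullisAux.tE m r X 0 (l - 1) + CullisAux.tE m r X 1 (l - 1)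
          = (-1 : F) ^ (l - 2) *
            ((X ⟨0, by omega⟩ 0 - X ⟨1, by omega⟩ 0) * X ⟨l - 1, by omega⟩ 1 -
             (X ⟨0, by omega⟩ 1 - X ⟨1, by omega⟩ 1) * X ⟨l - 1, by omega⟩ 0)
        rw [CullisAux.tE, CullisAux.tE]
        simp only [CullisAux.xE, dif_pos (show (0 : ℕ) < m + r from by omega),
          dif_pos (show (1 : ℕ) < m + r from by omega),
          dif_pos (show l - 1 < m + r from by omega)]
        rw [CullisAux.npow_mod (0 + (l - 1) + 1) (l - 2) (by omega),
          CullisAux.npow_mod (1 + (l - 1) + 1) ((l - 2) + 1) (by omega), pow_succ]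
        ring
  · -- double sum
    refine Finset.sum_bij (fun l hl => ⟨l, by rw [hE]; exact hl⟩) ?_ ?_ ?_ ?_
    · intro l hl
      exact Finset.mem_attach _ _
    · intro l1 h1 l2 h2 he
      simpa using congrArg Subtype.val he
    · intro b _
      have hb : (b : ℕ) ∈ Finset.Icc 3 m := by
        have h := b.2
        simp only [Finset.mem_Icc] at h ⊢
        omega
      exact ⟨(b : ℕ), hb, Subtype.ext rfl⟩
    · intro l hl
      simp only [Finset.mem_Icc] at hl
      refine Finset.sum_bij (fun mm hmm => ⟨mm, ?_⟩) ?_ ?_ ?_ ?_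
      · simp only [Finset.mem_Icc] at hmm ⊢
        exact ⟨(by omega : l + 1 ≤ mm), by omega⟩
      · intro mm hmm
        exact Finset.mem_attach _ _
      · intro m1 h1 m2 h2 he
        simpa using congrArg Subtype.val he
      · intro b _
        have hb := b.2
        simp only [Finset.mem_Icc] at hb
        have hb1 : l + 1 ≤ (b : ℕ) := hb.1
        have hb2 : (b : ℕ) ≤ m + r - (r + 2) + 2 := hb.2
        refine ⟨(b : ℕ), ?_, Subtype.ext rfl⟩
        simp only [Finset.mem_Icc]
        omega
      · intro mm hmm
        simp only [Finset.mem_Icc] at hmm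
        show CullisAux.tE m r X (l - 1) (mm - 1)
          = (-1 : F) ^ (l + mm - 3) *
            (X ⟨l - 1, by omega⟩ 0 * X ⟨mm - 1, by omega⟩ 1 -
             X ⟨l - 1, by omega⟩ 1 * X ⟨mm - 1, by omega⟩ 0)
        rw [CullisAux.tE]
        simp only [CullisAux.xE, dif_pos (show l - 1 < m + r from by omega),
          dif_pos (show mm - 1 < m + r from by omega)]
        rw [CullisAux.npow_mod ((l - 1) + (mm - 1) + 1) (l + mm - 3) (by omega)]
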